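/- arXiv:2106.14113 — 8 statements merged into one kernel-verified Lean document; each statement's English description precedes it below -/
import Mathlib

section
/- Let λ_c, λ_e > 0, Ω ≥ 0, c_th ≥ 0 be reals, let Q_U, Q_S, Z ≥ 0 and B ≤ Ω be reals, and let r, l_off, l_loc, l_edg, e_u, e_h, e_edg ≥ 0 be reals with l_off + l_loc ≤ Q_U and l_edg ≤ Q_S. Define the updated values Q_U' = Q_U − l_off − l_loc + r, Q_S' = Q_S − l_edg + l_off, B' = min(B − λ_e·e_u + λ_e·e_h, Ω), Z' = max(Z + λ_c·e_edg − λ_c·c_th, 0), and the Lyapunov functions Φ = (1/2)((B−Ω)² + Z² + Q_U² + Q_S²) and Φ' = (1/2)((B'−Ω)² + (Z')² + (Q_U')² + (Q_S')²). Then Φ' − Φ ≤ D − [Z·λ_c·(c_th − e_edg) + λ_e·(B−Ω)·(e_u − e_h) + Q_U·(l_off + l_loc − r) + Q_S·(l_edg − l_off)], where D = (1/2)[(λ_c·e_edg)² + (λ_c·c_th)² + (λ_e·e_u)² + (λ_e·e_h)² + (l_off + l_loc)² + r² + (l_edg)² + (l_off)²]. -/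
set_option maxHeartbeats 1000000


/-- Path-wise per-slot Lyapunov drift-plus-penalty upper bound (Lemma 1). -/
theorem lyapunov_drift_bound
    (lamC lamE Omega cth QU QS Z B r loff lloc ledg eu eh eedg : ℝ)
    (hlamC : 0 < lamC) (hlamE : 0 < lamE) (hOmega : 0 ≤ Omega) (hcth : 0 ≤ cth)
    (hQU : 0 ≤ QU) (hQS : 0 ≤ QS) (hZ : 0 ≤ Z) (hB : B ≤ Omega)
    (hr : 0 ≤ r) (hloff : 0 ≤ loff) (hlloc : 0 ≤ lloc) (hledg : 0 ≤ ledg)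
    (heu : 0 ≤ eu) (heh : 0 ≤ eh) (heedg : 0 ≤ eedg)
    (hdata : loff + lloc ≤ QU) (hedge : ledg ≤ QS)
    (QU' QS' B' Z' Phi Phi' D : ℝ)
    (hQU' : QU' = QU - loff - lloc + r)
    (hQS' : QS' = QS - ledg + loff)
    (hB' : B' = min (B - lamE * eu + lamE * eh) Omega)
    (hZ' : Z' = max (Z + lamC * eedg - lamC * cth) 0)
    (hPhi : Phi = (1/2) * ((B - Omega)^2 + Z^2 + QU^2 + QS^2))
    (hPhi' : Phi' = (1/2) * ((B' - Omega)^2 + Z'^2 + QU'^2 + QS'^2))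
    (hD : D = (1/2) * ((lamC * eedg)^2 + (lamC * cth)^2 + (lamE * eu)^2
        + (lamE * eh)^2 + (loff + lloc)^2 + r^2 + ledg^2 + loff^2)) :
    Phi' - Phi ≤ D - (Z * lamC * (cth - eedg) + lamE * (B - Omega) * (eu - eh)
      + QU * (loff + lloc - r) + QS * (ledg - loff)) := by

  have h1 : (B' - Omega)^2 ≤ (B - lamE * eu + lamE * eh - Omega)^2 := by
    rw [hB']
    rcases le_total (B - lamE * eu + lamE * eh) Omega with h | h
    · rw [min_eq_left h]
    · rw [min_eq_right h]
      simpa using sq_nonneg (B - lamE * eu + lamE * eh - Omega)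
  have h2 : Z'^2 ≤ (Z + lamC * eedg - lamC * cth)^2 := by
    rw [hZ']
    rcases le_total (Z + lamC * eedg - lamC * cth) 0 with h | h
    · rw [max_eq_right h]
      simpa using sq_nonneg (Z + lamC * eedg - lamC * cth)
    · rw [max_eq_left h]
  have kA : 0 ≤ lamE^2 * (eu * eh) :=
    mul_nonneg (sq_nonneg lamE) (mul_nonneg heu heh)
  have kC : 0 ≤ lamC^2 * (cth * eedg) :=
    mul_nonneg (sq_nonneg lamC) (mul_nonneg hcth heedg)
  have kQ1 : 0 ≤ r * (loff + lloc) := mul_nonneg hr (add_nonneg hloff hlloc)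
  have kQ2 : 0 ≤ loff * ledg := mul_nonneg hloff hledg
  have hA : (B - lamE * eu + lamE * eh - Omega)^2 =
      (B - Omega)^2 + (lamE * eu)^2 + (lamE * eh)^2
        - 2 * (lamE * (B - Omega) * (eu - eh)) - 2 * (lamE^2 * (eu * eh)) := by
    ring
  have hC : (Z + lamC * eedg - lamC * cth)^2 =
      Z^2 + (lamC * eedg)^2 + (lamC * cth)^2 - 2 * (Z * lamC * (cth - eedg))
        - 2 * (lamC^2 * (cth * eedg)) := by
    ring
  have hQ1 : QU'^2 = QU^2 + (loff + lloc)^2 + r^2 - 2 * (QU * (loff + lloc - r))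
      - 2 * (r * (loff + lloc)) := by
    rw [hQU']; ring
  have hQ2 : QS'^2 = QS^2 + ledg^2 + loff^2 - 2 * (QS * (ledg - loff))
      - 2 * (loff * ledg) := by
    rw [hQS']; ring
  rw [hA] at h1
  rw [hC] at h2
  rw [hPhi, hPhi', hD]
  linarith [h1, h2, hQ1, hQ2, kA, kC, kQ1, kQ2]
end

section
/- Let V ≥ 0 and r_max ≥ 0 be reals, and let Q : ℕ → ℝ, d : ℕ → ℝ, r : ℕ → ℝ be sequences such that 0 ≤ Q 0 ≤ V + r_max, and for every t: Q (t+1) = Q t − d t + r t, 0 ≤ d t ≤ Q t, r t ∈ {0, r_max}, and r t = r_max implies Q t ≤ V. Then 0 ≤ Q t ≤ V + r_max for all t ∈ ℕ. -/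
/-- Deterministic upper bound `Q_max = V + r_max` on the device data queue (Lemma 2). -/
theorem device_queue_bounded
    (V rmax : ℝ) (hV : 0 ≤ V) (hrmax : 0 ≤ rmax)
    (Q d r : ℕ → ℝ)
    (hQ0 : 0 ≤ Q 0 ∧ Q 0 ≤ V + rmax)
    (hrec : ∀ t, Q (t + 1) = Q t - d t + r t)
    (hd : ∀ t, 0 ≤ d t ∧ d t ≤ Q t)
    (hr : ∀ t, r t = 0 ∨ r t = rmax)
    (hsense : ∀ t, r t = rmax → Q t ≤ V) :
    ∀ t, 0 ≤ Q t ∧ Q t ≤ V + rmax := by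
  intro t
  induction t with
  | zero => exact hQ0
  | succ n ih =>
    obtain ⟨ih0, ih1⟩ := ih
    obtain ⟨hd0, hd1⟩ := hd n
    have hrn : 0 ≤ r n := by rcases hr n with h | h <;> simp [h, hrmax]
    constructor
    · rw [hrec n]; linarith
    · rcases hr n with h | h
      · rw [hrec n, h]; linarith
      · have := hsense n h
        rw [hrec n, h]; linarith
end

section
/- Fix positive reals λ_e, κ_c, T, W, C, γ and reals B̃ < 0, Q_U ≥ 0, Q_S ≥ 0. Define A₀ = (ln 2/(W·C·γ))·2^{Q_U/(W·T)} and U'(f) = 3·λ_e·κ_c·T·B̃·f² − λ_e·B̃·T·A₀·2^{−f/(W·C)} + (T/C)·Q_S. Then: (i) U' is strictly decreasing on [0, ∞); (ii) U'(0) > 0; (iii) U'(f) → −∞ as f → ∞; and (iv) there exists a unique f̄ ∈ [0, ∞) with U'(f̄) = 0. -/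
open Filter

/-- Lemma 4 (LemCase3): properties of the derivative `U'` of the restricted
per-slot task execution objective: strictly decreasing on `[0,∞)`, positive at `0`,
tends to `-∞`, and has a unique nonnegative root. -/
theorem Uprime_unique_root
    (lamE kc T W C γ Bt QU QS : ℝ)
    (hlamE : 0 < lamE) (hkc : 0 < kc) (hT : 0 < T) (hW : 0 < W)
    (hC : 0 < C) (hγ : 0 < γ) (hB : Bt < 0) (hQU : 0 ≤ QU) (hQS : 0 ≤ QS)
    (A0 : ℝ) (hA0 : A0 = (Real.log 2 / (W * C * γ)) * (2 : ℝ) ^ (QU / (W * T)))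
    (U' : ℝ → ℝ)
    (hU' : ∀ f, U' f = 3 * lamE * kc * T * Bt * f^2
        - lamE * Bt * T * A0 * (2 : ℝ) ^ (-f / (W * C)) + (T / C) * QS) :
    StrictAntiOn U' (Set.Ici 0) ∧ 0 < U' 0 ∧ Tendsto U' atTop atBot ∧
      ∃! f, f ∈ Set.Ici (0 : ℝ) ∧ U' f = 0 := by
  have hWC : 0 < W * C := mul_pos hW hC
  have hA0pos : 0 < A0 := by
    rw [hA0]
    exact mul_pos (div_pos (Real.log_pos one_lt_two) (by positivity))
      (Real.rpow_pos_of_pos two_pos _)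
  have hBt' : 0 < -Bt := neg_pos.2 hB
  have ha : 3 * lamE * kc * T * Bt < 0 := mul_neg_of_pos_of_neg (by positivity) hB
  have hb : 0 < -(lamE * Bt * T * A0) := by nlinarith [mul_pos (mul_pos (mul_pos hlamE hBt') hT) hA0pos]
  -- strict anti
  have hanti : StrictAntiOn U' (Set.Ici 0) := by
    intro x hx y hy hxy
    simp only [Set.mem_Ici] at hx hy
    rw [hU', hU']
    have hE : (2:ℝ) ^ (-y / (W * C)) < (2:ℝ) ^ (-x / (W * C)) := by
      apply Real.rpow_lt_rpow_left_iff one_lt_two |>.2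
      exact (div_lt_div_iff_of_pos_right hWC).2 (by linarith)
    have h1 : 3 * lamE * kc * T * Bt * y^2 < 3 * lamE * kc * T * Bt * x^2 := by
      apply mul_lt_mul_of_neg_left _ ha
      nlinarith
    nlinarith [mul_lt_mul_of_pos_left hE hb]
  -- value at 0
  have h0 : 0 < U' 0 := by
    rw [hU']
    rw [show -(0:ℝ) / (W * C) = 0 by ring, Real.rpow_zero]
    have : 0 ≤ T / C * QS := by positivity
    nlinarith [mul_pos (mul_pos (mul_pos hlamE hBt') hT) hA0pos]
  -- continuity
  have hEexp : ∀ f : ℝ, (2:ℝ) ^ (-f / (W * C)) = Real.exp (Real.log 2 * (-f / (W * C))) := by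
    intro f; rw [Real.rpow_def_of_pos two_pos]
  have hcont : Continuous U' := by
    have hfun : U' = fun f => 3 * lamE * kc * T * Bt * f^2
        - lamE * Bt * T * A0 * Real.exp (Real.log 2 * (-f / (W * C))) + (T / C) * QS := by
      funext f; rw [hU', hEexp]
    rw [hfun]; fun_prop
  -- tendsto atBot
  have htends : Tendsto U' atTop atBot := by
    have hfun : U' = fun f => 3 * lamE * kc * T * Bt * f^2
        + (- (lamE * Bt * T * A0) * (2:ℝ) ^ (-f / (W * C)) + (T / C) * QS) := by
      funext f; rw [hU']; ring
    rw [hfun]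
    have hf1 : Tendsto (fun f : ℝ => 3 * lamE * kc * T * Bt * f^2) atTop atBot :=
      (tendsto_pow_atTop (two_ne_zero)).const_mul_atTop_of_neg ha
    have hg1 : ∀ᶠ f : ℝ in atTop,
        (fun f : ℝ => -(lamE * Bt * T * A0) * (2:ℝ) ^ (-f / (W * C)) + (T / C) * QS) f
          ≤ -(lamE * Bt * T * A0) * 1 + (T / C) * QS := by
      filter_upwards [eventually_ge_atTop (0:ℝ)] with f hf
      have : (2:ℝ) ^ (-f / (W * C)) ≤ 1 := by
        rw [show (1:ℝ) = (2:ℝ) ^ (0:ℝ) by simp]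
        apply Real.rpow_le_rpow_left_iff one_lt_two |>.2
        apply div_nonpos_of_nonpos_of_nonneg (by linarith) hWC.le
      nlinarith [mul_le_mul_of_nonneg_left this hb.le]
    exact tendsto_atBot_add_right_of_ge' _ _ hf1 hg1
  refine ⟨hanti, h0, htends, ?_⟩
  -- existence
  obtain ⟨f0, hf0neg, hf0ge⟩ :
      ∃ f0, U' f0 < 0 ∧ (0:ℝ) ≤ f0 := by
    have := (htends.eventually (eventually_lt_atBot 0)).and (eventually_ge_atTop (0:ℝ))
    exact this.exists
  obtain ⟨r, hrmem, hr⟩ := intermediate_value_Icc' hf0ge (hcont.continuousOn)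
    (Set.mem_Icc.2 ⟨hf0neg.le, h0.le⟩)
  refine ⟨r, ⟨hrmem.1, hr⟩, ?_⟩
  intro s ⟨hs, hsz⟩
  by_contra hne
  rcases lt_or_gt_of_ne hne with h | h
  · have := hanti hs (Set.mem_Icc.1 hrmem |>.1) h
    rw [hsz, hr] at this; exact lt_irrefl 0 this
  · have := hanti (Set.mem_Icc.1 hrmem |>.1) hs h
    rw [hsz, hr] at this; exact lt_irrefl 0 this
end

section
/- Fix positive reals λ_e, T, W, C, κ_c, γ and reals B̃ < 0, p_th ≥ 0, f_max ≥ 0, and Q_U ≥ Q_S ≥ 0. Define F(f) = λ_e·B̃·κ_c·f³·T + Q_U·f·T/C, G(p) = λ_e·B̃·p·T + (Q_U − Q_S)·T·W·log₂(1 + p·γ), the feasible set S = {(p, f) : 0 ≤ p ≤ p_th, 0 ≤ f ≤ f_max, W·T·log₂(1 + p·γ) + f·T/C ≤ Q_U}, F_p(f) = (1/γ)·2^{(Q_U − f·T/C)/(W·T)} − 1/γ, p̄_th = min(p_th, F_p(0)), f̄_th = min(f_max, Q_U·C/T), f̂ = min(√(Q_U/(3·λ_e·(−B̃)·κ_c·C)),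 f̄_th), and p̂ = min(max((Q_S − Q_U)·W/(λ_e·B̃·ln 2) − 1/γ, 0), p̄_th). If W·T·log₂(1 + p̂·γ) + f̂·T/C ≤ Q_U, then (p̂, f̂) maximizes F(f) + G(p) over S; that is, F(f) + G(p) ≤ F(f̂) + G(p̂) for all (p, f) ∈ S. -/
lemma clamp_mul_nonpos (x lo hi q : ℝ) (hq1 : lo ≤ q) (hq2 : q ≤ hi) :
    (q - min (max x lo) hi) * (x - min (max x lo) hi) ≤ 0 := by
  have hlohi : lo ≤ hi := le_trans hq1 hq2
  rcases le_total x lo with h1 | h1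
  · rw [max_eq_right h1, min_eq_left hlohi]
    nlinarith
  · rw [max_eq_left h1]
    rcases le_total x hi with h2 | h2
    · rw [min_eq_left h2]; simp
    · rw [min_eq_right h2]; nlinarith

lemma cubic_max (A b s M f : ℝ) (hA : A < 0) (h3 : 3 * A * s ^ 2 + b = 0)
    (hs : 0 ≤ s) (hf0 : 0 ≤ f) (hfM : f ≤ M) :
    A * f ^ 3 + b * f ≤ A * (min s M) ^ 3 + b * (min s M) := by
  rcases le_total s M with h | h
  · rw [min_eq_left h]
    nlinarith [mul_nonneg (mul_nonneg (by linarith : (0:ℝ) ≤ -A) (sq_nonneg (s - f))) (by linarith : (0:ℝ) ≤ f + 2 * s)]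
  · rw [min_eq_right h]
    have h4 : M ^ 2 + M * f + f ^ 2 ≤ 3 * s ^ 2 := by nlinarith
    nlinarith [mul_nonneg (mul_nonneg (by linarith : (0:ℝ) ≤ -A) (sub_nonneg.mpr hfM))
      (by linarith : (0:ℝ) ≤ 3 * s ^ 2 - (M ^ 2 + M * f + f ^ 2))]

set_option maxHeartbeats 1000000 in
/-- Case (17a) of Proposition 1: when the separately optimal pair `(p̂, f̂)`
satisfies the data causality constraint, it maximizes `F f + G p` over the
feasible set. -/
theorem task_execution_case_a
    (lamE T W C kc γ Bt pth fmax QU QS : ℝ)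
    (hlamE : 0 < lamE) (hT : 0 < T) (hW : 0 < W) (hC : 0 < C)
    (hkc : 0 < kc) (hγ : 0 < γ) (hB : Bt < 0)
    (hpth : 0 ≤ pth) (hfmax : 0 ≤ fmax) (hQ : QS ≤ QU) (hQS : 0 ≤ QS)
    (F G : ℝ → ℝ)
    (hF : ∀ f, F f = lamE * Bt * kc * f^3 * T + QU * f * T / C)
    (hG : ∀ p, G p = lamE * Bt * p * T
        + (QU - QS) * T * W * Real.logb 2 (1 + p * γ))
    (Fp : ℝ → ℝ)
    (hFp : ∀ f, Fp f = (1 / γ) * (2 : ℝ) ^ ((QU - f * T / C) / (W * T)) - 1 / γ)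
    (pbarth fbarth fhat phat : ℝ)
    (hpbarth : pbarth = min pth (Fp 0))
    (hfbarth : fbarth = min fmax (QU * C / T))
    (hfhat : fhat = min (Real.sqrt (QU / (3 * lamE * (-Bt) * kc * C))) fbarth)
    (hphat : phat = min (max ((QS - QU) * W / (lamE * Bt * Real.log 2) - 1 / γ) 0) pbarth)
    (hcase : W * T * Real.logb 2 (1 + phat * γ) + fhat * T / C ≤ QU) :
    ∀ p f : ℝ, 0 ≤ p → p ≤ pth → 0 ≤ f → f ≤ fmax →
      W * T * Real.logb 2 (1 + p * γ) + f * T / C ≤ QU →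
      F f + G p ≤ F fhat + G phat := by
  intro p f hp hppth hf hffmax hcon
  have hQU : 0 ≤ QU := le_trans hQS hQ
  have hln2 : 0 < Real.log 2 := Real.log_pos one_lt_two
  have hBt' : 0 < -Bt := by linarith
  have hl0 : lamE ≠ 0 := ne_of_gt hlamE
  have hb0 : Bt ≠ 0 := ne_of_lt hB
  have hk0 : kc ≠ 0 := ne_of_gt hkc
  have hC0 : C ≠ 0 := ne_of_gt hC
  have hγ0 : γ ≠ 0 := ne_of_gt hγ
  have hln20 : Real.log 2 ≠ 0 := ne_of_gt hln2
  have hp1 : (0:ℝ) < 1 + p * γ := by nlinarith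
  have hlogb_p_nonneg : 0 ≤ Real.logb 2 (1 + p * γ) :=
    Real.logb_nonneg one_lt_two (by nlinarith)
  ------------------------------------------------------------------
  -- Part 1 : F f ≤ F fhat
  ------------------------------------------------------------------
  have hFle : F f ≤ F fhat := by
    set s := Real.sqrt (QU / (3 * lamE * (-Bt) * kc * C)) with hs
    have hden : (0:ℝ) < 3 * lamE * (-Bt) * kc * C := by positivity
    have hs2 : s ^ 2 = QU / (3 * lamE * (-Bt) * kc * C) :=
      Real.sq_sqrt (div_nonneg hQU hden.le)
    have hs0 : 0 ≤ s := Real.sqrt_nonneg _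
    have hfle : f * T / C ≤ QU := by
      nlinarith [mul_nonneg (mul_nonneg hW.le hT.le) hlogb_p_nonneg]
    have hfM : f ≤ fbarth := by
      have h' : f * T / C * C ≤ QU * C := mul_le_mul_of_nonneg_right hfle hC.le
      rw [div_mul_cancel₀ _ hC0] at h'
      have : f ≤ QU * C / T := by rw [le_div_iff₀ hT]; linarith
      rw [hfbarth]; exact le_min hffmax this
    have h3 : 3 * (lamE * Bt * kc * T) * s ^ 2 + QU * T / C = 0 := by
      rw [hs2]; field_simp; ring
    have key := cubic_max (lamE * Bt * kc * T) (QU * T / C) s fbarth f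
      (by nlinarith) h3 hs0 hf hfM
    rw [hF, hF, hfhat]
    calc lamE * Bt * kc * f ^ 3 * T + QU * f * T / C
        = lamE * Bt * kc * T * f ^ 3 + QU * T / C * f := by ring
      _ ≤ lamE * Bt * kc * T * (min s fbarth) ^ 3 + QU * T / C * (min s fbarth) := key
      _ = lamE * Bt * kc * (min s fbarth) ^ 3 * T + QU * (min s fbarth) * T / C := by ring
  ------------------------------------------------------------------
  -- Part 2 : G p ≤ G phat
  ------------------------------------------------------------------
  have hGle : G p ≤ G phat := by
    set pstar := (QS - QU) * W / (lamE * Bt * Real.log 2) - 1 / γ with hpstar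
    have hFp0 : Fp 0 = (1 / γ) * (2:ℝ) ^ (QU / (W * T)) - 1 / γ := by
      rw [hFp]; norm_num
    have hppb : p ≤ pbarth := by
      have hlb : Real.logb 2 (1 + p * γ) ≤ QU / (W * T) := by
        rw [le_div_iff₀ (by positivity : (0:ℝ) < W * T)]
        linarith [div_nonneg (mul_nonneg hf hT.le) hC.le]
      have h2p : (1 + p * γ) ≤ (2:ℝ) ^ (QU / (W * T)) := by
        have := Real.rpow_le_rpow_of_exponent_le (one_le_two) hlb
        rwa [Real.rpow_logb two_pos (by norm_num) hp1] at this
      have hpFp : p ≤ Fp 0 := by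
        rw [hFp0]
        have h' : p ≤ ((2:ℝ) ^ (QU / (W * T)) - 1) / γ := by
          rw [le_div_iff₀ hγ]; linarith
        have heq : ((2:ℝ) ^ (QU / (W * T)) - 1) / γ
            = 1 / γ * (2:ℝ) ^ (QU / (W * T)) - 1 / γ := by ring
        linarith [heq ▸ h']
      rw [hpbarth]; exact le_min hppth hpFp
    have hpb0 : 0 ≤ pbarth := le_trans hp hppb
    have hphat0 : 0 ≤ phat := by
      rw [hphat]; exact le_min (le_max_right _ _) hpb0
    have hh1 : (0:ℝ) < 1 + phat * γ := by nlinarith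
    have hlog : Real.log (1 + p * γ) - Real.log (1 + phat * γ)
        ≤ γ * (p - phat) / (1 + phat * γ) := by
      have h := Real.log_le_sub_one_of_pos (div_pos hp1 hh1)
      rw [Real.log_div hp1.ne' hh1.ne'] at h
      have heq : (1 + p * γ) / (1 + phat * γ) - 1 = γ * (p - phat) / (1 + phat * γ) := by
        field_simp; ring
      linarith [heq ▸ h]
    have hclamp : (p - phat) * (pstar - phat) ≤ 0 := by
      rw [hphat]; exact clamp_mul_nonpos pstar 0 pbarth p hp hppb
    have hid : lamE * Bt * T * Real.log 2 * (1 + phat * γ) + (QU - QS) * T * W * γ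
        = (-(lamE * Bt * T) * Real.log 2 * γ) * (pstar - phat) := by
      rw [hpstar]; field_simp; ring
    have hK : (0:ℝ) < -(lamE * Bt * T) * Real.log 2 * γ := by
      have h1 : (0:ℝ) < -(lamE * Bt * T) := by nlinarith [mul_pos (mul_pos hlamE hBt') hT]
      positivity
    have hkey : (p - phat) * (lamE * Bt * T * Real.log 2 * (1 + phat * γ)
        + (QU - QS) * T * W * γ) ≤ 0 := by
      rw [hid]
      have h1 := mul_le_mul_of_nonneg_left hclamp hK.le
      nlinarith [h1]
    -- assemble
    rw [hG, hG, Real.logb, Real.logb]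
    have hd : 0 ≤ (QU - QS) * T * W := by
      have : 0 ≤ QU - QS := by linarith
      positivity
    have hdd : (0:ℝ) < (1 + phat * γ) * Real.log 2 := by positivity
    have step1 : (QU - QS) * T * W * (Real.log (1 + p * γ) / Real.log 2)
        ≤ (QU - QS) * T * W * (Real.log (1 + phat * γ) / Real.log 2)
          + (QU - QS) * T * W * (γ * (p - phat) / (1 + phat * γ)) / Real.log 2 := by
      have h1 : (QU - QS) * T * W * (Real.log (1 + p * γ) - Real.log (1 + phat * γ))
          ≤ (QU - QS) * T * W * (γ * (p - phat) / (1 + phat * γ)) :=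
        mul_le_mul_of_nonneg_left hlog hd
      have h2 : (QU - QS) * T * W * (Real.log (1 + p * γ) - Real.log (1 + phat * γ))
            / Real.log 2
          ≤ (QU - QS) * T * W * (γ * (p - phat) / (1 + phat * γ)) / Real.log 2 := by
        gcongr
      have h3 : (QU - QS) * T * W * (Real.log (1 + p * γ) - Real.log (1 + phat * γ))
            / Real.log 2
          = (QU - QS) * T * W * (Real.log (1 + p * γ) / Real.log 2)
            - (QU - QS) * T * W * (Real.log (1 + phat * γ) / Real.log 2) := by ring
      linarith [h3 ▸ h2]
    have final : lamE * Bt * T * (p - phat)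
        + (QU - QS) * T * W * (γ * (p - phat) / (1 + phat * γ)) / Real.log 2 ≤ 0 := by
      have h := div_nonpos_of_nonpos_of_nonneg hkey hdd.le
      have heq : (p - phat) * (lamE * Bt * T * Real.log 2 * (1 + phat * γ)
          + (QU - QS) * T * W * γ) / ((1 + phat * γ) * Real.log 2)
          = lamE * Bt * T * (p - phat)
            + (QU - QS) * T * W * (γ * (p - phat) / (1 + phat * γ)) / Real.log 2 := by
        field_simp
      linarith [heq ▸ h]
    linarith [step1, final]
  linarith
end

section
/- Fix positive reals λ_e, T, W, C, κ_c, γ and reals B̃ < 0, p_th ≥ 0, f_max ≥ 0, and 0 ≤ Q_U < Q_S. Define F(f) = λ_e·B̃·κ_c·f³·T + Q_U·f·T/C, G(p) = λ_e·B̃·p·T + (Q_U − Q_S)·T·W·log₂(1 + p·γ), the feasible set S = {(p, f) : 0 ≤ p ≤ p_th, 0 ≤ f ≤ f_max, W·T·log₂(1 + p·γ) + f·T/C ≤ Q_U}, f̄_th = min(f_max, Q_U·C/T), and f̂ = min(√(Q_U/(3·λ_e·(−B̃)·κ_c·C)), f̄_th). Then (0, f̂) maximizes F(f) + G(p) over S;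 that is, F(f) + G(p) ≤ F(f̂) + G(0) for all (p, f) ∈ S. -/
lemma cubic_max_aux (a b s m f : ℝ) (ha : 0 < a) (hb : b = 3*a*s^2) (hs : 0 ≤ s)
    (hf : 0 ≤ f) (hm : 0 ≤ m) (hms : m ≤ s) (hcase : f ≤ m ∨ s ≤ m) :
    -a*f^3 + b*f ≤ -a*m^3 + b*m := by
  rcases hcase with h | h
  · have hfs : f ≤ s := le_trans h hms
    have h2 : 0 ≤ 3*s^2 - (m^2 + m*f + f^2) := by nlinarith
    nlinarith [mul_nonneg (mul_nonneg ha.le (sub_nonneg.2 h)) h2]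
  · have hm' : m = s := le_antisymm hms h
    subst hm'
    nlinarith [mul_nonneg (mul_nonneg ha.le (sq_nonneg (m - f))) (by linarith : (0:ℝ) ≤ 2*m + f)]

/-- Case (17d) of Proposition 1: when the device queue is shorter than the edge
queue, the optimal per-slot task execution performs no offloading and computes
locally at CPU frequency `f̂`. -/
theorem task_execution_case_d
    (lamE T W C kc γ Bt pth fmax QU QS : ℝ)
    (hlamE : 0 < lamE) (hT : 0 < T) (hW : 0 < W) (hC : 0 < C)
    (hkc : 0 < kc) (hγ : 0 < γ) (hB : Bt < 0)
    (hpth : 0 ≤ pth) (hfmax : 0 ≤ fmax) (hQU : 0 ≤ QU) (hQ : QU < QS)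
    (F G : ℝ → ℝ)
    (hF : ∀ f, F f = lamE * Bt * kc * f^3 * T + QU * f * T / C)
    (hG : ∀ p, G p = lamE * Bt * p * T
        + (QU - QS) * T * W * Real.logb 2 (1 + p * γ))
    (fbarth fhat : ℝ)
    (hfbarth : fbarth = min fmax (QU * C / T))
    (hfhat : fhat = min (Real.sqrt (QU / (3 * lamE * (-Bt) * kc * C))) fbarth) :
    ∀ p f : ℝ, 0 ≤ p → p ≤ pth → 0 ≤ f → f ≤ fmax →
      W * T * Real.logb 2 (1 + p * γ) + f * T / C ≤ QU →
      F f + G p ≤ F fhat + G 0 := by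
  intro p f hp hppth hf hffmax hcons
  set s := Real.sqrt (QU / (3 * lamE * (-Bt) * kc * C)) with hsdef
  have hden : 0 < 3 * lamE * (-Bt) * kc * C :=
    mul_pos (mul_pos (mul_pos (mul_pos (by norm_num : (0:ℝ) < 3) hlamE) (neg_pos.2 hB)) hkc) hC
  have hs0 : 0 ≤ s := Real.sqrt_nonneg _
  have hs2 : s^2 = QU / (3 * lamE * (-Bt) * kc * C) := by
    rw [hsdef, Real.sq_sqrt (by positivity)]
  have hs2' : s^2 * (3 * lamE * (-Bt) * kc * C) = QU := by
    rw [hs2]; exact div_mul_cancel₀ _ (ne_of_gt hden)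
  -- G p ≤ G 0
  have hlog0 : Real.logb 2 (1 : ℝ) = 0 := by simp
  have hlogp : 0 ≤ Real.logb 2 (1 + p * γ) := by
    apply Real.logb_nonneg (by norm_num)
    nlinarith
  have hGle : G p ≤ G 0 := by
    rw [hG, hG]
    simp only [mul_zero, zero_mul, zero_add, add_zero, hlog0]
    have h1 : lamE * Bt * p * T ≤ 0 := by
      nlinarith [mul_nonneg (mul_nonneg (mul_nonneg hlamE.le (neg_nonneg.2 hB.le)) hp) hT.le]
    have h2 : (QU - QS) * T * W * Real.logb 2 (1 + p * γ) ≤ 0 := by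
      apply mul_nonpos_of_nonpos_of_nonneg _ hlogp
      nlinarith [mul_nonneg (mul_nonneg (sub_pos.2 hQ).le hT.le) hW.le]
    linarith
  -- constraint gives f ≤ QU * C / T
  have hfQ : f * T / C ≤ QU := by
    have : 0 ≤ W * T * Real.logb 2 (1 + p * γ) := by positivity
    linarith
  have hfQ' : f ≤ QU * C / T := by
    rw [le_div_iff₀ hT]
    rw [div_le_iff₀ hC] at hfQ
    linarith
  have hffb : f ≤ fbarth := by rw [hfbarth]; exact le_min hffmax hfQ'
  have hfb0 : 0 ≤ fbarth := by
    rw [hfbarth]; exact le_min hfmax (div_nonneg (mul_nonneg hQU hC.le) hT.le)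
  -- F f ≤ F fhat
  have ha : 0 < lamE * (-Bt) * kc * T :=
    mul_pos (mul_pos (mul_pos hlamE (neg_pos.2 hB)) hkc) hT
  have hb : QU * T / C = 3 * (lamE * (-Bt) * kc * T) * s^2 := by
    rw [← hs2']
    field_simp
  have hcase : f ≤ fhat ∨ s ≤ fhat := by
    rw [hfhat]
    rcases le_total s fbarth with h | h
    · right; rw [min_eq_left h]
    · left; rw [min_eq_right h]; exact hffb
  have hfhat0 : 0 ≤ fhat := by rw [hfhat]; exact le_min hs0 hfb0
  have hfhats : fhat ≤ s := by rw [hfhat]; exact min_le_left _ _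
  have hkey := cubic_max_aux (lamE * (-Bt) * kc * T) (QU * T / C) s fhat f ha hb hs0 hf hfhat0 hfhats hcase
  have hFle : F f ≤ F fhat := by
    rw [hF, hF]
    have e1 : lamE * Bt * kc * f^3 * T + QU * f * T / C
        = -(lamE * (-Bt) * kc * T)*f^3 + (QU * T / C)*f := by ring
    have e2 : lamE * Bt * kc * fhat^3 * T + QU * fhat * T / C
        = -(lamE * (-Bt) * kc * T)*fhat^3 + (QU * T / C)*fhat := by ring
    rw [e1, e2]; exact hkey
  linarith
end

section
/- Fix positive reals λ_e, T, W, C, κ_c, γ and reals B̃ < 0, p_th ≥ 0, f_max ≥ 0, and Q_U ≥ Q_S ≥ 0. Define F(f) = λ_e·B̃·κ_c·f³·T + Q_U·f·T/C, G(p) = λ_e·B̃·p·T + (Q_U − Q_S)·T·W·log₂(1 + p·γ), the feasible set S = {(p, f) : 0 ≤ p ≤ p_th, 0 ≤ f ≤ f_max, W·T·log₂(1 + p·γ) + f·T/C ≤ Q_U}, F_p(f) = (1/γ)·2^{(Q_U − f·T/C)/(W·T)} − 1/γ, F_f(p) = (Q_U − W·T·log₂(1 + p·γ))·C/T, p̄_th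 = min(p_th, F_p(0)), f̄_th = min(f_max, Q_U·C/T), f̂ = min(√(Q_U/(3·λ_e·(−B̃)·κ_c·C)), f̄_th), and p̂ = min(max((Q_S − Q_U)·W/(λ_e·B̃·ln 2) − 1/γ, 0), p̄_th). Suppose W·T·log₂(1 + p̂·γ) + f̂·T/C > Q_U. Let f̄ be the unique nonnegative root of U'(f) = 3·λ_e·κ_c·T·B̃·f² − λ_e·B̃·T·A₀·2^{−f/(W·C)} + (T/C)·Q_S, where A₀ = (ln 2/(W·C·γ))·2^{Q_U/(W·T)}, and set f* = min(max(f̄, max(0, F_f(p̂))), f̂). Then (F_p(f*), f*) ∈ S and F(f) + G(p) ≤ F(f*) + G(F_p(f*)) for all (p, f) ∈ S. -/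
/-!
For `p ≥ 0` the data causality constraint says exactly `p ≤ F_p f`, where `F_p` is strictly
decreasing with inverse `F_f`. The objective `F f + G p` is separable, and both `F` and `G` rise up
to a stationary point (`√(Q_U / (3 λ_e (-B̃) κ_c C))`, resp. the unclamped `p̂`) and fall after it,
so a feasible `(p, f)` may be replaced by `(min p p̂, min f f̂)`. As `(p̂, f̂)` is infeasible, from
there one reaches the boundary without loss, raising `f` to `F_f p` or, if that passes `f̂`,
raising `p` to `F_p f̂`. On the boundary the objective is `H f = F f + G (F_p f)` with `H' = U'`;
since `U'` decreases and vanishes at `f̄`, the maximum of `H` over `[max 0 (F_f p̂), f̂]` is at the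
clamp `f*` of `f̄`.
-/

open Set Real

section Calculus

variable {φ φ' : ℝ → ℝ} {D : Set ℝ}

theorem monotoneOn_of_hasDerivAt_nonneg (hD : Convex ℝ D)
    (hφ : ∀ x ∈ D, HasDerivAt φ (φ' x) x) (h : ∀ x ∈ interior D, 0 ≤ φ' x) :
    MonotoneOn φ D :=
  monotoneOn_of_hasDerivWithinAt_nonneg hD
    (fun x hx => (hφ x hx).continuousAt.continuousWithinAt)
    (fun x hx => (hφ x (interior_subset hx)).hasDerivWithinAt) h

theorem antitoneOn_of_hasDerivAt_nonpos (hD : Convex ℝ D)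
    (hφ : ∀ x ∈ D, HasDerivAt φ (φ' x) x) (h : ∀ x ∈ interior D, φ' x ≤ 0) :
    AntitoneOn φ D :=
  antitoneOn_of_hasDerivWithinAt_nonpos hD
    (fun x hx => (hφ x hx).continuousAt.continuousWithinAt)
    (fun x hx => (hφ x (interior_subset hx)).hasDerivWithinAt) h

theorem monotoneOn_Icc_antitoneOn_Ici_of_antitoneOn_deriv {a m : ℝ}
    (hφ : ∀ x ∈ Ici a, HasDerivAt φ (φ' x) x) (hφ' : AntitoneOn φ' (Ici a)) (ham : a ≤ m)
    (hm : φ' m = 0) : MonotoneOn φ (Icc a m) ∧ AntitoneOn φ (Ici m) := by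
  constructor
  · refine monotoneOn_of_hasDerivAt_nonneg (convex_Icc a m) (fun x hx => hφ x hx.1)
      fun x hx => ?_
    rw [interior_Icc] at hx
    exact hm ▸ hφ' hx.1.le ham hx.2.le
  · refine antitoneOn_of_hasDerivAt_nonpos (convex_Ici m) (fun x hx => hφ x (ham.trans hx))
      fun x hx => ?_
    rw [interior_Ici] at hx
    exact hm ▸ hφ' ham (ham.trans hx.le) hx.le

end Calculus

section Clamp

variable {φ : ℝ → ℝ}

theorem AntitoneOn.le_apply_min_min {a u x : ℝ} (h : AntitoneOn φ (Ici a)) (hx : x ≤ u) :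
    φ x ≤ φ (min x (min a u)) := by
  rcases le_total x (min a u) with hle | hle
  · rw [min_eq_left hle]
  rw [min_eq_right hle]
  rcases le_total a u with hau | hau
  · rw [min_eq_left hau] at hle ⊢
    exact h self_mem_Ici hle hle
  · rw [min_eq_right hau] at hle ⊢
    rw [le_antisymm hx hle]

theorem le_apply_min_max_of_monotoneOn_of_antitoneOn {lo m hi z : ℝ}
    (hmono : MonotoneOn φ (Icc lo m)) (hanti : AntitoneOn φ (Ici m)) (hz : z ∈ Icc lo hi) :
    φ z ≤ φ (min (max m lo) hi) := by
  rcases le_total z m with hzm | hmz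
  · rw [max_eq_left (hz.1.trans hzm)]
    exact hmono ⟨hz.1, hzm⟩ ⟨le_min (hz.1.trans hzm) (hz.1.trans hz.2), min_le_left _ _⟩
      (le_min hzm hz.2)
  · exact hanti (le_min (le_max_left _ _) (hmz.trans hz.2)) hmz
      (min_le_of_left_le (max_le hmz hz.1))

end Clamp

theorem add_le_of_le_boundary {F G Fp Ff : ℝ → ℝ} {fhat phat M p f : ℝ}
    (hFp : StrictAnti Fp) (hFpFf : ∀ q, 0 ≤ q → Fp (Ff q) = q)
    (hF : MonotoneOn F (Icc 0 fhat)) (hG : MonotoneOn G (Icc 0 (Fp fhat)))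
    (hM : ∀ z ∈ Icc (max 0 (Ff phat)) fhat, F z + G (Fp z) ≤ M) (hphat : Ff phat ≤ fhat)
    (hp : 0 ≤ p) (hpphat : p ≤ phat) (hf : 0 ≤ f) (hffhat : f ≤ fhat) (hpf : p ≤ Fp f) :
    F f + G p ≤ M := by
  have hFf : ∀ {q x}, 0 ≤ q → (x ≤ Ff q ↔ q ≤ Fp x) := fun hq => by
    rw [← hFp.le_iff_ge, hFpFf _ hq]
  by_cases hc : Ff p ≤ fhat
  · have hfp : f ≤ Ff p := (hFf hp).2 hpf
    have hlo : max 0 (Ff phat) ≤ Ff p :=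
      max_le (hf.trans hfp) ((hFf hp).2 (by rwa [hFpFf phat (hp.trans hpphat)]))
    calc F f + G p ≤ F (Ff p) + G (Fp (Ff p)) := by
          rw [hFpFf p hp]
          exact add_le_add_left (hF ⟨hf, hfp.trans hc⟩ ⟨hf.trans hfp, hc⟩ hfp) _
      _ ≤ M := hM _ ⟨hlo, hc⟩
  · have hpf' : p ≤ Fp fhat := (hFf hp).1 (le_of_not_ge hc)
    have hfhat : 0 ≤ fhat := hf.trans hffhat
    calc F f + G p ≤ F fhat + G (Fp fhat) :=
          add_le_add (hF ⟨hf, hffhat⟩ ⟨hfhat, le_rfl⟩ hffhat)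
            (hG ⟨hp, hpf'⟩ ⟨hp.trans hpf', le_rfl⟩ hpf')
      _ ≤ M := hM _ ⟨max_le hfhat hphat, le_rfl⟩

theorem clamped_boundary_point_optimal {F G Fp Ff : ℝ → ℝ} {D : ℝ → ℝ → ℝ}
    {Q a b fbar fcap pth fmax fhat phat fstar : ℝ}
    (hD : ∀ p f, 0 ≤ p → (D p f ≤ Q ↔ p ≤ Fp f))
    (hFp : StrictAnti Fp) (hFpFf : ∀ q, 0 ≤ q → Fp (Ff q) = q)
    (hFp_nonneg : ∀ f, 0 ≤ Fp f ↔ f ≤ fcap)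
    (hF₁ : MonotoneOn F (Icc 0 a)) (hF₂ : AntitoneOn F (Ici a))
    (hG₁ : MonotoneOn G (Icc 0 b)) (hG₂ : AntitoneOn G (Ici (max b 0)))
    (hH₁ : MonotoneOn (fun z => F z + G (Fp z)) (Icc 0 fbar))
    (hH₂ : AntitoneOn (fun z => F z + G (Fp z)) (Ici fbar))
    (ha : 0 ≤ a) (hpth : 0 ≤ pth) (hfmax : 0 ≤ fmax) (hfcap : 0 ≤ fcap)
    (hfhat : fhat = min a (min fmax fcap)) (hphat : phat = min (max b 0) (min pth (Fp 0)))
    (hcase : Q < D phat fhat) (hfstar : fstar = min (max fbar (max 0 (Ff phat))) fhat) :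
    (0 ≤ Fp fstar ∧ Fp fstar ≤ pth ∧ 0 ≤ fstar ∧ fstar ≤ fmax ∧ D (Fp fstar) fstar ≤ Q) ∧
    ∀ p f, 0 ≤ p → p ≤ pth → 0 ≤ f → f ≤ fmax → D p f ≤ Q →
      F f + G p ≤ F fstar + G (Fp fstar) := by
  have hfhat_le : fhat ≤ fmax ∧ fhat ≤ fcap :=
    hfhat ▸ ⟨(min_le_right ..).trans (min_le_left ..), (min_le_right ..).trans (min_le_right ..)⟩
  have hfhat0 : 0 ≤ fhat := hfhat ▸ le_min ha (le_min hfmax hfcap)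
  have hphat0 : 0 ≤ phat :=
    hphat ▸ le_min (le_max_right ..) (le_min hpth ((hFp_nonneg 0).2 hfcap))
  have hFp_fhat : Fp fhat < phat := lt_of_not_ge fun h => hcase.not_ge ((hD _ _ hphat0).2 h)
  have hFf_phat : Ff phat ≤ fhat :=
    hFp.le_iff_ge.1 (by rw [hFpFf phat hphat0]; exact hFp_fhat.le)
  have hfstar_mem : fstar ∈ Icc (max 0 (Ff phat)) fhat :=
    hfstar ▸ ⟨le_min (le_max_right ..) (max_le hfhat0 hFf_phat), min_le_right ..⟩
  have hFp_fstar : 0 ≤ Fp fstar := (hFp_nonneg fstar).2 (hfstar_mem.2.trans hfhat_le.2)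
  refine ⟨⟨hFp_fstar, ?_, (le_max_left ..).trans hfstar_mem.1, hfstar_mem.2.trans hfhat_le.1,
    (hD _ _ hFp_fstar).2 le_rfl⟩, fun p f hp hpth' hf hfmax' hpf => ?_⟩
  · calc Fp fstar ≤ Fp (Ff phat) := hFp.antitone ((le_max_right ..).trans hfstar_mem.1)
      _ = phat := hFpFf phat hphat0
      _ ≤ pth := hphat ▸ (min_le_right ..).trans (min_le_left ..)
  rw [hD p f hp] at hpf
  have hM : ∀ z ∈ Icc (max 0 (Ff phat)) fhat, F z + G (Fp z) ≤ F fstar + G (Fp fstar) :=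
    fun z hz => hfstar ▸ le_apply_min_max_of_monotoneOn_of_antitoneOn
      (hH₁.mono (Icc_subset_Icc_left (le_max_left ..))) hH₂ hz
  have hFp_fhat_le : Fp fhat ≤ b :=
    ((lt_max_iff.1 (hFp_fhat.trans_le (hphat ▸ min_le_left ..))).resolve_right
      (not_lt.2 ((hFp_nonneg fhat).2 hfhat_le.2))).le
  calc F f + G p ≤ F (min f fhat) + G (min p phat) := by
        rw [hfhat, hphat]
        exact add_le_add (hF₂.le_apply_min_min (le_min hfmax' ((hFp_nonneg f).1 (hp.trans hpf))))
          (hG₂.le_apply_min_min (le_min hpth' (hpf.trans (hFp.antitone hf))))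
    _ ≤ _ := add_le_of_le_boundary hFp hFpFf
        (hF₁.mono (Icc_subset_Icc_right (hfhat ▸ min_le_left ..)))
        (hG₁.mono (Icc_subset_Icc_right hFp_fhat_le)) hM hFf_phat
        (le_min hp hphat0) (min_le_right ..) (le_min hf hfhat0) (min_le_right ..)
        ((min_le_left ..).trans (hpf.trans (hFp.antitone (min_le_left ..))))

section Boundary

variable {T W C γ QU : ℝ} {Fp Ff : ℝ → ℝ}

theorem one_add_Fp_mul_eq_rpow (hγ : γ ≠ 0)
    (hFp : ∀ f, Fp f = (1 / γ) * (2 : ℝ) ^ ((QU - f * T / C) / (W * T)) - 1 / γ) (f : ℝ) :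
    1 + Fp f * γ = 2 ^ ((QU - f * T / C) / (W * T)) := by
  rw [hFp]
  field_simp
  ring

theorem dataRate_Fp_add_eq (hγ : γ ≠ 0) (hW : W ≠ 0) (hT : T ≠ 0)
    (hFp : ∀ f, Fp f = (1 / γ) * (2 : ℝ) ^ ((QU - f * T / C) / (W * T)) - 1 / γ) (f : ℝ) :
    W * T * logb 2 (1 + Fp f * γ) + f * T / C = QU := by
  rw [one_add_Fp_mul_eq_rpow hγ hFp, logb_rpow two_pos (by norm_num)]
  field_simp
  ring

theorem dataRate_add_le_iff_le_Fp (hγ : 0 < γ) (hW : 0 < W) (hT : 0 < T)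
    (hFp : ∀ f, Fp f = (1 / γ) * (2 : ℝ) ^ ((QU - f * T / C) / (W * T)) - 1 / γ)
    {p : ℝ} (f : ℝ) (hp : 0 < 1 + p * γ) :
    W * T * logb 2 (1 + p * γ) + f * T / C ≤ QU ↔ p ≤ Fp f := by
  rw [← dataRate_Fp_add_eq hγ.ne' hW.ne' hT.ne' hFp f, add_le_add_iff_right,
    mul_le_mul_iff_of_pos_left (by positivity), logb_le_logb one_lt_two hp
      (by rw [one_add_Fp_mul_eq_rpow hγ.ne' hFp]; positivity),
    add_le_add_iff_left, mul_le_mul_iff_of_pos_right hγ]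

theorem strictAnti_Fp (hγ : 0 < γ) (hW : 0 < W) (hT : 0 < T) (hC : 0 < C)
    (hFp : ∀ f, Fp f = (1 / γ) * (2 : ℝ) ^ ((QU - f * T / C) / (W * T)) - 1 / γ) :
    StrictAnti Fp := by
  intro x y hxy
  suffices 1 + Fp y * γ < 1 + Fp x * γ from lt_of_mul_lt_mul_right (by linarith) hγ.le
  rw [one_add_Fp_mul_eq_rpow hγ.ne' hFp, one_add_Fp_mul_eq_rpow hγ.ne' hFp,
    rpow_lt_rpow_left_iff one_lt_two]
  gcongr

theorem Fp_nonneg_iff (hγ : 0 < γ) (hW : 0 < W) (hT : 0 < T) (hC : 0 < C)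
    (hFp : ∀ f, Fp f = (1 / γ) * (2 : ℝ) ^ ((QU - f * T / C) / (W * T)) - 1 / γ) (f : ℝ) :
    0 ≤ Fp f ↔ f ≤ QU * C / T := by
  have h : Fp (QU * C / T) = 0 := by
    rw [hFp, show QU - QU * C / T * T / C = 0 by field_simp; ring, zero_div, rpow_zero]
    ring
  rw [← h, (strictAnti_Fp hγ hW hT hC hFp).le_iff_ge]

theorem Fp_Ff (hγ : γ ≠ 0) (hW : W ≠ 0) (hT : T ≠ 0) (hC : C ≠ 0)
    (hFp : ∀ f, Fp f = (1 / γ) * (2 : ℝ) ^ ((QU - f * T / C) / (W * T)) - 1 / γ)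
    (hFf : ∀ p, Ff p = (QU - W * T * logb 2 (1 + p * γ)) * C / T) {p : ℝ} (hp : 0 < 1 + p * γ) :
    Fp (Ff p) = p := by
  have h := one_add_Fp_mul_eq_rpow hγ hFp (Ff p)
  rw [show (QU - Ff p * T / C) / (W * T) = logb 2 (1 + p * γ) by rw [hFf]; field_simp; ring,
    rpow_logb two_pos (by norm_num) hp] at h
  exact mul_right_cancel₀ hγ (by linarith)

end Boundary

section Utilities

variable {lamE T W C kc γ Bt QU QS : ℝ} {F G : ℝ → ℝ}

theorem hasDerivAt_F (hC : C ≠ 0)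
    (hF : ∀ f, F f = lamE * Bt * kc * f ^ 3 * T + QU * f * T / C) (f : ℝ) :
    HasDerivAt F (T / C * (QU - f ^ 2 * (3 * lamE * (-Bt) * kc * C))) f := by
  rw [funext hF]
  refine ((((hasDerivAt_pow 3 f).const_mul (lamE * Bt * kc)).mul_const T).add
    (((hasDerivAt_id' f).const_mul QU).mul_const T |>.div_const C)).congr_deriv ?_
  field_simp
  ring

theorem monotoneOn_F (hlamE : 0 < lamE) (hB : Bt < 0) (hkc : 0 < kc) (hT : 0 < T) (hC : 0 < C)
    (hF : ∀ f, F f = lamE * Bt * kc * f ^ 3 * T + QU * f * T / C) :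
    MonotoneOn F (Icc 0 √(QU / (3 * lamE * (-Bt) * kc * C))) := by
  have hb : 0 < -Bt := neg_pos.2 hB
  refine monotoneOn_of_hasDerivAt_nonneg (convex_Icc _ _) (fun f _ => hasDerivAt_F hC.ne' hF f)
    fun x hx => ?_
  rw [interior_Icc] at hx
  have hx2 := (lt_sqrt hx.1.le).1 hx.2
  rw [lt_div_iff₀ (by positivity)] at hx2
  exact mul_nonneg (by positivity) (by linarith)

theorem antitoneOn_F (hlamE : 0 < lamE) (hB : Bt < 0) (hkc : 0 < kc) (hT : 0 < T) (hC : 0 < C)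
    (hF : ∀ f, F f = lamE * Bt * kc * f ^ 3 * T + QU * f * T / C) :
    AntitoneOn F (Ici √(QU / (3 * lamE * (-Bt) * kc * C))) := by
  have hb : 0 < -Bt := neg_pos.2 hB
  refine antitoneOn_of_hasDerivAt_nonpos (convex_Ici _) (fun f _ => hasDerivAt_F hC.ne' hF f)
    fun x hx => ?_
  rw [interior_Ici] at hx
  have hx2 := (sqrt_lt' ((sqrt_nonneg _).trans_lt hx)).1 hx
  rw [div_lt_iff₀ (by positivity)] at hx2
  exact mul_nonpos_of_nonneg_of_nonpos (by positivity) (by linarith)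

theorem hasDerivAt_G (hlamE : lamE ≠ 0) (hB : Bt ≠ 0) (hγ : γ ≠ 0)
    (hG : ∀ p, G p = lamE * Bt * p * T + (QU - QS) * T * W * logb 2 (1 + p * γ))
    {p : ℝ} (hp : 0 < 1 + p * γ) :
    HasDerivAt G (lamE * (-Bt) * T * γ *
      ((QS - QU) * W / (lamE * Bt * log 2) - 1 / γ - p) / (1 + p * γ)) p := by
  have hlog : HasDerivAt (fun p => logb 2 (1 + p * γ)) (γ / (1 + p * γ) / log 2) p := by
    simpa [logb] using
      ((((hasDerivAt_id' p).mul_const γ).const_add 1).log hp.ne').div_const (log 2)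
  have hlog2 := (log_pos one_lt_two).ne'
  have hp' : 1 + γ * p ≠ 0 := by rw [mul_comm]; exact hp.ne'
  rw [funext hG]
  refine ((((hasDerivAt_id' p).const_mul (lamE * Bt)).mul_const T).add
    (hlog.const_mul ((QU - QS) * T * W))).congr_deriv ?_
  field_simp
  ring

theorem monotoneOn_G (hlamE : 0 < lamE) (hB : Bt < 0) (hT : 0 < T) (hγ : 0 < γ)
    (hG : ∀ p, G p = lamE * Bt * p * T + (QU - QS) * T * W * logb 2 (1 + p * γ)) :
    MonotoneOn G (Icc 0 ((QS - QU) * W / (lamE * Bt * log 2) - 1 / γ)) := by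
  have hb : 0 < -Bt := neg_pos.2 hB
  have hp : ∀ p : ℝ, 0 ≤ p → 0 < 1 + p * γ := fun p hp => by positivity
  refine monotoneOn_of_hasDerivAt_nonneg (convex_Icc _ _)
    (fun p hp' => hasDerivAt_G hlamE.ne' hB.ne hγ.ne' hG (hp p hp'.1)) fun x hx => ?_
  rw [interior_Icc] at hx
  exact div_nonneg (mul_nonneg (by positivity) (sub_nonneg.2 hx.2.le)) (hp x hx.1.le).le

theorem antitoneOn_G (hlamE : 0 < lamE) (hB : Bt < 0) (hT : 0 < T) (hγ : 0 < γ)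
    (hG : ∀ p, G p = lamE * Bt * p * T + (QU - QS) * T * W * logb 2 (1 + p * γ)) :
    AntitoneOn G (Ici (max ((QS - QU) * W / (lamE * Bt * log 2) - 1 / γ) 0)) := by
  have hb : 0 < -Bt := neg_pos.2 hB
  have hp : ∀ p : ℝ, 0 ≤ p → 0 < 1 + p * γ := fun p hp => by positivity
  refine antitoneOn_of_hasDerivAt_nonpos (convex_Ici _)
    (fun p hp' => hasDerivAt_G hlamE.ne' hB.ne hγ.ne' hG (hp p (le_of_max_le_right hp')))
    fun x hx => ?_
  rw [interior_Ici, mem_Ioi, max_lt_iff] at hx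
  exact div_nonpos_of_nonpos_of_nonneg
    (mul_nonpos_of_nonneg_of_nonpos (by positivity) (sub_nonpos.2 hx.1.le)) (hp x hx.2.le).le

end Utilities

section Surface

variable {lamE T W C kc γ Bt QU QS A0 : ℝ} {F G Fp U' : ℝ → ℝ}

theorem hasDerivAt_Fp (hT : T ≠ 0)
    (hFp : ∀ f, Fp f = (1 / γ) * (2 : ℝ) ^ ((QU - f * T / C) / (W * T)) - 1 / γ) (f : ℝ) :
    HasDerivAt Fp (-(log 2 / (W * C * γ)) * 2 ^ ((QU - f * T / C) / (W * T))) f := by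
  rw [funext hFp]
  refine ((((((hasDerivAt_id' f).mul_const T).div_const C).const_sub QU).div_const (W * T)
    |>.const_rpow two_pos).const_mul (1 / γ)).sub_const (1 / γ) |>.congr_deriv ?_
  field_simp

/-- On the boundary the logarithm in `G` is affine in `f` (`dataRate_Fp_add_eq`), so `G ∘ Fp` is
an exponential plus an affine function. -/
theorem hasDerivAt_F_add_G_comp_Fp (hW : W ≠ 0) (hT : T ≠ 0) (hC : C ≠ 0) (hγ : γ ≠ 0)
    (hF : ∀ f, F f = lamE * Bt * kc * f ^ 3 * T + QU * f * T / C)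
    (hG : ∀ p, G p = lamE * Bt * p * T + (QU - QS) * T * W * logb 2 (1 + p * γ))
    (hFp : ∀ f, Fp f = (1 / γ) * (2 : ℝ) ^ ((QU - f * T / C) / (W * T)) - 1 / γ)
    (hA0 : A0 = (log 2 / (W * C * γ)) * (2 : ℝ) ^ (QU / (W * T)))
    (hU' : ∀ f, U' f = 3 * lamE * kc * T * Bt * f ^ 2
        - lamE * Bt * T * A0 * (2 : ℝ) ^ (-f / (W * C)) + (T / C) * QS) (z : ℝ) :
    HasDerivAt (fun z => F z + G (Fp z)) (U' z) z := by
  have hH : (fun z => F z + G (Fp z))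
      = fun z => F z + lamE * Bt * T * Fp z + (QU - QS) * (QU - z * T / C) := by
    funext z
    rw [hG]
    linear_combination (QU - QS) * dataRate_Fp_add_eq hγ hW hT hFp z
  have hexp : (2 : ℝ) ^ (QU / (W * T)) * 2 ^ (-z / (W * C))
      = 2 ^ ((QU - z * T / C) / (W * T)) := by
    rw [← rpow_add two_pos]
    congr 1
    field_simp
    ring
  rw [hH]
  refine (((hasDerivAt_F hC hF z).add ((hasDerivAt_Fp hT hFp z).const_mul (lamE * Bt * T))).add
    (((((hasDerivAt_id' z).mul_const T).div_const C).const_sub QU).const_mul (QU - QS)))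
    |>.congr_deriv ?_
  rw [hU', hA0, ← hexp]
  field_simp
  ring

theorem antitoneOn_U' (hlamE : 0 < lamE) (hB : Bt < 0) (hkc : 0 < kc) (hT : 0 < T)
    (hW : 0 < W) (hC : 0 < C) (hγ : 0 < γ)
    (hA0 : A0 = (log 2 / (W * C * γ)) * (2 : ℝ) ^ (QU / (W * T)))
    (hU' : ∀ f, U' f = 3 * lamE * kc * T * Bt * f ^ 2
        - lamE * Bt * T * A0 * (2 : ℝ) ^ (-f / (W * C)) + (T / C) * QS) :
    AntitoneOn U' (Ici 0) := by
  have hb : 0 < -Bt := neg_pos.2 hB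
  have hA0 : 0 < A0 := by rw [hA0]; have := log_pos one_lt_two; positivity
  intro x hx y hy hxy
  have hsq : x ^ 2 ≤ y ^ 2 := pow_le_pow_left₀ hx hxy 2
  have hexp : (2 : ℝ) ^ (-y / (W * C)) ≤ 2 ^ (-x / (W * C)) :=
    rpow_le_rpow_of_exponent_le one_le_two (by gcongr)
  rw [hU', hU']
  nlinarith [mul_le_mul_of_nonneg_left hsq (by positivity : 0 ≤ 3 * lamE * kc * T * -Bt),
    mul_le_mul_of_nonneg_left hexp (by positivity : 0 ≤ lamE * -Bt * T * A0)]

end Surface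

theorem task_execution_case_c_general
    (lamE T W C kc γ Bt pth fmax QU QS : ℝ)
    (hlamE : 0 < lamE) (hT : 0 < T) (hW : 0 < W) (hC : 0 < C)
    (hkc : 0 < kc) (hγ : 0 < γ) (hB : Bt < 0)
    (hpth : 0 ≤ pth) (hfmax : 0 ≤ fmax) (hQ : QS ≤ QU) (hQS : 0 ≤ QS)
    (F G : ℝ → ℝ)
    (hF : ∀ f, F f = lamE * Bt * kc * f^3 * T + QU * f * T / C)
    (hG : ∀ p, G p = lamE * Bt * p * T
        + (QU - QS) * T * W * Real.logb 2 (1 + p * γ))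
    (Fp Ff : ℝ → ℝ)
    (hFp : ∀ f, Fp f = (1 / γ) * (2 : ℝ) ^ ((QU - f * T / C) / (W * T)) - 1 / γ)
    (hFf : ∀ p, Ff p = (QU - W * T * Real.logb 2 (1 + p * γ)) * C / T)
    (pbarth fbarth fhat phat : ℝ)
    (hpbarth : pbarth = min pth (Fp 0))
    (hfbarth : fbarth = min fmax (QU * C / T))
    (hfhat : fhat = min (Real.sqrt (QU / (3 * lamE * (-Bt) * kc * C))) fbarth)
    (hphat : phat = min (max ((QS - QU) * W / (lamE * Bt * Real.log 2) - 1 / γ) 0) pbarth)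
    (hcase : QU < W * T * Real.logb 2 (1 + phat * γ) + fhat * T / C)
    (A0 : ℝ) (hA0 : A0 = (Real.log 2 / (W * C * γ)) * (2 : ℝ) ^ (QU / (W * T)))
    (U' : ℝ → ℝ)
    (hU' : ∀ f, U' f = 3 * lamE * kc * T * Bt * f^2
        - lamE * Bt * T * A0 * (2 : ℝ) ^ (-f / (W * C)) + (T / C) * QS)
    (fbar : ℝ) (hfbar : 0 ≤ fbar ∧ U' fbar = 0)
    (fstar : ℝ) (hfstar : fstar = min (max fbar (max 0 (Ff phat))) fhat) :
    (0 ≤ Fp fstar ∧ Fp fstar ≤ pth ∧ 0 ≤ fstar ∧ fstar ≤ fmax ∧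
      W * T * Real.logb 2 (1 + Fp fstar * γ) + fstar * T / C ≤ QU) ∧
    ∀ p f : ℝ, 0 ≤ p → p ≤ pth → 0 ≤ f → f ≤ fmax →
      W * T * Real.logb 2 (1 + p * γ) + f * T / C ≤ QU →
      F f + G p ≤ F fstar + G (Fp fstar) := by
  have hQU : 0 ≤ QU := hQS.trans hQ
  have hH := monotoneOn_Icc_antitoneOn_Ici_of_antitoneOn_deriv
    (fun z _ => hasDerivAt_F_add_G_comp_Fp hW.ne' hT.ne' hC.ne' hγ.ne' hF hG hFp hA0 hU' z)
    (antitoneOn_U' hlamE hB hkc hT hW hC hγ hA0 hU') hfbar.1 hfbar.2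
  exact clamped_boundary_point_optimal
    (fun p f hp => dataRate_add_le_iff_le_Fp hγ hW hT hFp f (by positivity))
    (strictAnti_Fp hγ hW hT hC hFp)
    (fun q hq => Fp_Ff hγ.ne' hW.ne' hT.ne' hC.ne' hFp hFf (by positivity))
    (Fp_nonneg_iff hγ hW hT hC hFp)
    (monotoneOn_F hlamE hB hkc hT hC hF) (antitoneOn_F hlamE hB hkc hT hC hF)
    (monotoneOn_G hlamE hB hT hγ hG) (antitoneOn_G hlamE hB hT hγ hG) hH.1 hH.2
    (sqrt_nonneg _) hpth hfmax (by positivity) (by rw [hfhat, hfbarth]) (by rw [hphat, hpbarth])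
    hcase hfstar

/-- Case (17c) of Proposition 1: when the separately optimal pair `(p̂, f̂)`
violates the data causality constraint and the battery is not full, the optimum
lies on the constraint surface `p = Fp f` at the clamped root `f*` of `U'`. -/
theorem task_execution_case_c
    (lamE T W C kc γ Bt pth fmax QU QS : ℝ)
    (hlamE : 0 < lamE) (hT : 0 < T) (hW : 0 < W) (hC : 0 < C)
    (hkc : 0 < kc) (hγ : 0 < γ) (hB : Bt < 0)
    (hpth : 0 ≤ pth) (hfmax : 0 ≤ fmax) (hQ : QS ≤ QU) (hQS : 0 ≤ QS)
    (F G : ℝ → ℝ)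
    (hF : ∀ f, F f = lamE * Bt * kc * f^3 * T + QU * f * T / C)
    (hG : ∀ p, G p = lamE * Bt * p * T
        + (QU - QS) * T * W * Real.logb 2 (1 + p * γ))
    (Fp Ff : ℝ → ℝ)
    (hFp : ∀ f, Fp f = (1 / γ) * (2 : ℝ) ^ ((QU - f * T / C) / (W * T)) - 1 / γ)
    (hFf : ∀ p, Ff p = (QU - W * T * Real.logb 2 (1 + p * γ)) * C / T)
    (pbarth fbarth fhat phat : ℝ)
    (hpbarth : pbarth = min pth (Fp 0))
    (hfbarth : fbarth = min fmax (QU * C / T))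
    (hfhat : fhat = min (Real.sqrt (QU / (3 * lamE * (-Bt) * kc * C))) fbarth)
    (hphat : phat = min (max ((QS - QU) * W / (lamE * Bt * Real.log 2) - 1 / γ) 0) pbarth)
    (hcase : QU < W * T * Real.logb 2 (1 + phat * γ) + fhat * T / C)
    (A0 : ℝ) (hA0 : A0 = (Real.log 2 / (W * C * γ)) * (2 : ℝ) ^ (QU / (W * T)))
    (U' : ℝ → ℝ)
    (hU' : ∀ f, U' f = 3 * lamE * kc * T * Bt * f^2
        - lamE * Bt * T * A0 * (2 : ℝ) ^ (-f / (W * C)) + (T / C) * QS)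
    (fbar : ℝ) (hfbar : 0 ≤ fbar ∧ U' fbar = 0)
    (hfbar_uniq : ∀ f, 0 ≤ f ∧ U' f = 0 → f = fbar)
    (fstar : ℝ) (hfstar : fstar = min (max fbar (max 0 (Ff phat))) fhat) :
    (0 ≤ Fp fstar ∧ Fp fstar ≤ pth ∧ 0 ≤ fstar ∧ fstar ≤ fmax ∧
      W * T * Real.logb 2 (1 + Fp fstar * γ) + fstar * T / C ≤ QU) ∧
    ∀ p f : ℝ, 0 ≤ p → p ≤ pth → 0 ≤ f → f ≤ fmax →
      W * T * Real.logb 2 (1 + p * γ) + f * T / C ≤ QU →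
      F f + G p ≤ F fstar + G (Fp fstar) :=
  task_execution_case_c_general lamE T W C kc γ Bt pth fmax QU QS hlamE hT hW hC hkc hγ hB hpth
    hfmax hQ hQS F G hF hG Fp Ff hFp hFf pbarth fbarth fhat phat hpbarth hfbarth hfhat hphat hcase
    A0 hA0 U' hU' fbar hfbar fstar hfstar
end

section
/- Fix positive reals λ_e, κ_c, κ_e, C, T, W, γ and nonnegative reals V, r_max, Q_S, and reals a ≥ 0, Ω > a, B with 0 ≤ B ≤ a, and Q_U with 0 ≤ Q_U ≤ V + r_max. Define f̂ = √(Q_U/(3·λ_e·(Ω − B)·κ_c·C)), p̃ = (Q_U − Q_S)·W/(λ_e·(Ω − B)·ln 2) − 1/γ, and H(Ω) = λ_e·κ_e·T·((V + r_max)/(3·λ_e·κ_c·C·(Ω − a)))^{3/2} + (V + r_max)·W·T/((Ω − a)·ln 2). Then λ_e·T·(κ_e·f̂³ + max(p̃, 0)) ≤ H(Ω). In particular, if H(Ω) ≤ B_min for a real B_min, then the per-slot energy consumption λ_e·T·(κ_e·f̂³ + max(p̃, 0)) on local computing and offloading is at most B_min. -/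
/-- Case III estimate in the proof of Proposition 2: the per-slot energy
consumption on local computing and offloading is bounded by the worst-case
energy `H(Ω)` as a function of the battery capacity. -/
theorem per_slot_energy_bounded_by_H
    (lamE kc ke C T W γ V rmax QS a Omega B QU : ℝ)
    (hlamE : 0 < lamE) (hkc : 0 < kc) (hke : 0 < ke) (hC : 0 < C)
    (hT : 0 < T) (hW : 0 < W) (hγ : 0 < γ)
    (hV : 0 ≤ V) (hrmax : 0 ≤ rmax) (hQS : 0 ≤ QS)
    (ha : 0 ≤ a) (hOmega : a < Omega) (hB0 : 0 ≤ B) (hBa : B ≤ a)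
    (hQU0 : 0 ≤ QU) (hQUub : QU ≤ V + rmax)
    (fhat ptilde HOmega : ℝ)
    (hfhat : fhat = Real.sqrt (QU / (3 * lamE * (Omega - B) * kc * C)))
    (hptilde : ptilde = (QU - QS) * W / (lamE * (Omega - B) * Real.log 2) - 1 / γ)
    (hHOmega : HOmega = lamE * ke * T *
        ((V + rmax) / (3 * lamE * kc * C * (Omega - a))) ^ ((3 : ℝ) / 2)
        + (V + rmax) * W * T / ((Omega - a) * Real.log 2)) :
    lamE * T * (ke * fhat^3 + max ptilde 0) ≤ HOmega ∧
    ∀ Bmin : ℝ, HOmega ≤ Bmin →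
      lamE * T * (ke * fhat^3 + max ptilde 0) ≤ Bmin := by
  have hOB : 0 < Omega - B := by linarith
  have hOa : 0 < Omega - a := by linarith
  have hlog : 0 < Real.log 2 := Real.log_pos (by norm_num)
  set x : ℝ := QU / (3 * lamE * (Omega - B) * kc * C) with hx
  set y : ℝ := (V + rmax) / (3 * lamE * kc * C * (Omega - a)) with hy
  have hxnn : 0 ≤ x := by positivity
  have hynn : 0 ≤ y := by positivity
  have hxy : x ≤ y := by
    apply div_le_div₀ (by linarith) hQUub (by positivity)
    nlinarith [mul_pos hlamE hkc, mul_pos (mul_pos hlamE hkc) hC]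
  have hfcube : fhat ^ 3 = x ^ ((3 : ℝ) / 2) := by
    rw [hfhat, Real.sqrt_eq_rpow, ← Real.rpow_natCast (x ^ ((1:ℝ)/2)) 3,
      ← Real.rpow_mul hxnn]
    norm_num
  have hterm1 : lamE * T * (ke * fhat ^ 3) ≤
      lamE * ke * T * y ^ ((3 : ℝ) / 2) := by
    rw [hfcube]
    have := Real.rpow_le_rpow hxnn hxy (by norm_num : (0:ℝ) ≤ 3/2)
    nlinarith [Real.rpow_nonneg hxnn ((3:ℝ)/2), mul_pos hlamE hT,
      mul_pos (mul_pos hlamE hT) hke]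
  have hterm2 : lamE * T * max ptilde 0 ≤
      (V + rmax) * W * T / ((Omega - a) * Real.log 2) := by
    rcases le_total ptilde 0 with h | h
    · rw [max_eq_right h]
      have : (0:ℝ) ≤ (V + rmax) * W * T / ((Omega - a) * Real.log 2) := by positivity
      linarith
    · rw [max_eq_left h]
      have hpt : ptilde ≤ (V + rmax) * W / (lamE * (Omega - a) * Real.log 2) := by
        rw [hptilde]
        have h1 : (QU - QS) * W / (lamE * (Omega - B) * Real.log 2) ≤
            (V + rmax) * W / (lamE * (Omega - a) * Real.log 2) := by
          apply div_le_div₀ (by positivity)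
            (by nlinarith) (by positivity)
            (by nlinarith [mul_pos hlamE hlog])
        have h2 : (0:ℝ) ≤ 1 / γ := by positivity
        linarith
      calc lamE * T * ptilde
          ≤ lamE * T * ((V + rmax) * W / (lamE * (Omega - a) * Real.log 2)) := by
            apply mul_le_mul_of_nonneg_left hpt (by positivity)
        _ = (V + rmax) * W * T / ((Omega - a) * Real.log 2) := by
            field_simp
  have hmain : lamE * T * (ke * fhat^3 + max ptilde 0) ≤ HOmega := by
    rw [hHOmega]
    have : lamE * T * (ke * fhat^3 + max ptilde 0) =
        lamE * T * (ke * fhat^3) + lamE * T * max ptilde 0 := by ring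
    rw [this]
    exact add_le_add hterm1 hterm2
  exact ⟨hmain, fun Bmin hB => le_trans hmain hB⟩
end

section
/- Let D, φ, R̄ be reals, V ≥ 0 and ε > 0 be reals, and let Φ, Y, r : ℕ → ℝ be sequences with Φ t ≥ 0, Y t ≥ 0, and r t ≤ R̄ for all t, such that Φ (t+1) − Φ t ≤ D − V·φ + V·(r t) − ε·(Y t) for all t. Then limsup_{N → ∞} (1/N)·∑_{t=0}^{N−1} Y t ≤ (D + V·(R̄ − φ))/ε. -/
open Filter

/-- Telescoping argument for part (b) of Proposition 3: the time-average
aggregate queue length is at most `(D + V (R̄ - φ)) / ε`. -/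
theorem plyse_queue_stability
    (D φ Rbar V ε : ℝ) (hV : 0 ≤ V) (hε : 0 < ε)
    (Phi Y r : ℕ → ℝ)
    (hPhi : ∀ t, 0 ≤ Phi t)
    (hY : ∀ t, 0 ≤ Y t)
    (hr : ∀ t, r t ≤ Rbar)
    (hdrift : ∀ t, Phi (t + 1) - Phi t ≤ D - V * φ + V * r t - ε * Y t) :
    limsup (fun N : ℕ => (1 / (N : ℝ)) * ∑ t ∈ Finset.range N, Y t) atTop
      ≤ (D + V * (Rbar - φ)) / ε := by
  set C := D + V * (Rbar - φ) with hC
  have key : ∀ N : ℕ, ε * ∑ t ∈ Finset.range N, Y t ≤ N * C + Phi 0 := by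
    intro N
    have tele : ∑ t ∈ Finset.range N, (Phi (t + 1) - Phi t) = Phi N - Phi 0 :=
      Finset.sum_range_sub Phi N
    have hsum : ∑ t ∈ Finset.range N, (Phi (t + 1) - Phi t)
        ≤ ∑ t ∈ Finset.range N, (C - ε * Y t) := by
      refine Finset.sum_le_sum fun t _ => ?_
      have h1 := hdrift t
      have h2 := hr t
      nlinarith
    rw [tele] at hsum
    have hs : ∑ t ∈ Finset.range N, (C - ε * Y t)
        = N * C - ε * ∑ t ∈ Finset.range N, Y t := by
      rw [Finset.sum_sub_distrib, Finset.sum_const, ← Finset.mul_sum, Finset.card_range]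
      ring
    rw [hs] at hsum
    have := hPhi N
    linarith
  set g : ℕ → ℝ := fun N => C / ε + Phi 0 / (ε * N) with hg
  have hev : ∀ᶠ N : ℕ in atTop,
      (1 / (N : ℝ)) * ∑ t ∈ Finset.range N, Y t ≤ g N := by
    filter_upwards [eventually_ge_atTop 1] with N hN
    have hN0 : (0 : ℝ) < N := by exact_mod_cast hN
    have h1 : ∑ t ∈ Finset.range N, Y t ≤ ((N : ℝ) * C + Phi 0) / ε :=
      (le_div_iff₀' hε).mpr (key N)
    have h2 : (1 / (N : ℝ)) * ∑ t ∈ Finset.range N, Y t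
        ≤ (1 / (N : ℝ)) * (((N : ℝ) * C + Phi 0) / ε) :=
      mul_le_mul_of_nonneg_left h1 (by positivity)
    have h3 : (1 / (N : ℝ)) * (((N : ℝ) * C + Phi 0) / ε) = g N := by
      simp only [hg]
      field_simp
    linarith [h3 ▸ h2]
  have htend : Tendsto g atTop (nhds (C / ε)) := by
    have h1 : Tendsto (fun N : ℕ => (ε * N : ℝ)) atTop atTop :=
      (tendsto_natCast_atTop_atTop).const_mul_atTop hε
    have h2 : Tendsto (fun N : ℕ => Phi 0 / (ε * N)) atTop (nhds 0) :=
      Tendsto.div_atTop tendsto_const_nhds h1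
    have := tendsto_const_nhds.add h2 (x := atTop) (a := C / ε)
    simpa using this
  have hcob : IsCoboundedUnder (· ≤ ·)  atTop
      (fun N : ℕ => (1 / (N : ℝ)) * ∑ t ∈ Finset.range N, Y t) := by
    refine isCoboundedUnder_le_of_le atTop (x := 0) fun N => ?_
    apply mul_nonneg (by positivity)
    exact Finset.sum_nonneg fun t _ => hY t
  have hbdd : IsBoundedUnder (· ≤ ·) atTop g := htend.isBoundedUnder_le
  calc limsup (fun N : ℕ => (1 / (N : ℝ)) * ∑ t ∈ Finset.range N, Y t) atTop
      ≤ limsup g atTop := limsup_le_limsup hev hcob hbdd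
    _ = C / ε := htend.limsup_eq
end
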